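/- Let G_{S,D}, G_{S,R_1}, G_{S,R_2}, G_{R_1,D}, G_{R_2,D} be independent random variables, each exponentially distributed with rates λ_{S,D}, λ_{S,R_1}, λ_{S,R_2}, λ_{R_1,D}, λ_{R_2,D} > 0 respectively, and fix r ∈ (0, 1/2). Then as s → ∞, Pr[{1+sG_{S,R_1} ≥ (1+s)^{2r}} ∩ {1+sG_{S,R_2} ≥ (1+s)^{2r}} ∩ {(1+sG_{S,D})·(1+s(G_{R_1,D}+G_{R_2,D})) < (1+s)^{2r}}] is asymptotically equivalent to (1/2)·λ_{S,D}·λ_{R_1,D}·λ_{R_2,D}·s^{−(3−4r)}. -/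

import Mathlib

/-!
Write `t = (1+s)^{2r}` and `ε = (t-1)/s`, which tends to `0` because `2r < 1`. The event
`1 + s G ≥ t` is `G ≥ ε`, so by independence the probability factors as
`e^{-λ_{S,R₁} ε} e^{-λ_{S,R₂} ε} · P[(1 + sX)(1 + sY) < t]` with `X = G_{S,D}` and
`Y = G_{R₁,D} + G_{R₂,D}`. Only `X, Y ∈ [0, ε]` matter for the last factor, and there the
density of `X` is `λ_{S,D}` and `P[Y < w]` is `λ_{R₁,D} λ_{R₂,D} w² / 2`, both up to a factor
between `e^{-O(ε)}` and `1`. Integrating over the sections `Y < g(x) = (t/(1+sx) - 1)/s` gives,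
with `c = λ_{S,D} λ_{R₁,D} λ_{R₂,D} / 2`, the main term `c ∫₀^ε g² = c (t² - 2t log t - 1)/s³`,
and `t² - 2t log t - 1 ~ t² ~ s^{4r}`.
-/
open MeasureTheory ProbabilityTheory Filter Asymptotics Real Set
open scoped Topology ENNReal

section ExponentialLaw

variable {l : ℝ}

lemma lintegral_expMeasure_eq_lintegral_exponentialPDF_mul (φ : ℝ → ℝ≥0∞) :
    ∫⁻ x, φ x ∂expMeasure l = ∫⁻ x, exponentialPDF l x * φ x :=
  lintegral_withDensity_eq_lintegral_mul_non_measurable _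
    (ENNReal.measurable_ofReal.comp (measurable_exponentialPDFReal l))
    (ae_of_all _ fun _ => ENNReal.ofReal_lt_top) φ

lemma expMeasure_Iio_eq_expMeasure_Iic (c : ℝ) :
    expMeasure l (Iio c) = expMeasure l (Iic c) :=
  have : NullSingletonClass (expMeasure l) := nullSingletonClass_withDensity _
  measure_congr Iio_ae_eq_Iic

lemma expMeasure_Iio_of_nonneg (hl : 0 < l) {c : ℝ} (hc : 0 ≤ c) :
    expMeasure l (Iio c) = ENNReal.ofReal (1 - rexp (-(l * c))) := by
  have := isProbabilityMeasure_expMeasure hl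
  rw [expMeasure_Iio_eq_expMeasure_Iic, ← ofReal_cdf, cdf_expMeasure_eq hl, if_pos hc]

lemma expMeasure_Iio_of_nonpos (hl : 0 < l) {c : ℝ} (hc : c ≤ 0) : expMeasure l (Iio c) = 0 := by
  have := isProbabilityMeasure_expMeasure hl
  rcases hc.lt_or_eq with hc | rfl
  · rw [expMeasure_Iio_eq_expMeasure_Iic, ← ofReal_cdf, cdf_expMeasure_eq hl,
      if_neg hc.not_ge, ENNReal.ofReal_zero]
  · simp [expMeasure_Iio_of_nonneg hl le_rfl]

lemma ae_nonneg_expMeasure (hl : 0 < l) : ∀ᵐ x ∂expMeasure l, 0 ≤ x := by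
  rw [ae_iff]
  simp only [not_le]
  exact expMeasure_Iio_of_nonpos hl le_rfl

lemma expMeasure_Ici (hl : 0 < l) {a : ℝ} (ha : 0 ≤ a) :
    expMeasure l (Ici a) = ENNReal.ofReal (rexp (-(l * a))) := by
  have := isProbabilityMeasure_expMeasure hl
  rw [← compl_Iio, prob_compl_eq_one_sub measurableSet_Iio, expMeasure_Iio_of_nonneg hl ha,
    ← ENNReal.ofReal_one,
    ← ENNReal.ofReal_sub 1 (sub_nonneg.2 (exp_le_one_iff.2 (by nlinarith))), sub_sub_cancel]

lemma expMeasure_Iio_le (hl : 0 < l) {c : ℝ} (hc : 0 ≤ c) :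
    expMeasure l (Iio c) ≤ ENNReal.ofReal (l * c) := by
  rw [expMeasure_Iio_of_nonneg hl hc]
  exact ENNReal.ofReal_le_ofReal (by linarith [add_one_le_exp (-(l * c))])

lemma ofReal_le_expMeasure_Iio (hl : 0 < l) {c : ℝ} (hc : 0 ≤ c) :
    ENNReal.ofReal (l * c * rexp (-(l * c))) ≤ expMeasure l (Iio c) := by
  rw [expMeasure_Iio_of_nonneg hl hc]
  refine ENNReal.ofReal_le_ofReal ?_
  have h := mul_le_mul_of_nonneg_right (add_one_le_exp (l * c)) (exp_pos (-(l * c))).le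
  rw [← exp_add, add_neg_cancel, exp_zero] at h
  linarith

lemma lintegral_indicator_Icc_ofReal {ε : ℝ} {u : ℝ → ℝ} (hu : IntegrableOn u (Icc 0 ε))
    (hu0 : ∀ x ∈ Icc 0 ε, 0 ≤ u x) :
    ∫⁻ x, (Icc 0 ε).indicator (fun x => ENNReal.ofReal (u x)) x
      = ENNReal.ofReal (∫ x in Icc 0 ε, u x) := by
  rw [lintegral_indicator measurableSet_Icc,
    ofReal_integral_eq_lintegral_ofReal hu
      ((ae_restrict_iff' measurableSet_Icc).2 (ae_of_all _ hu0))]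

lemma lintegral_expMeasure_le (hl : 0 < l) {ε : ℝ} {φ : ℝ → ℝ≥0∞} {u : ℝ → ℝ}
    (hu : IntegrableOn u (Icc 0 ε)) (hu0 : ∀ x ∈ Icc 0 ε, 0 ≤ u x)
    (hφu : ∀ x ∈ Icc 0 ε, φ x ≤ ENNReal.ofReal (u x)) (hφ : ∀ x, ε < x → φ x = 0) :
    ∫⁻ x, φ x ∂expMeasure l ≤ ENNReal.ofReal (l * ∫ x in Icc 0 ε, u x) := by
  rw [lintegral_expMeasure_eq_lintegral_exponentialPDF_mul, ← integral_const_mul,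
    ← lintegral_indicator_Icc_ofReal (hu.const_mul l) fun x hx => mul_nonneg hl.le (hu0 x hx)]
  refine lintegral_mono fun x => ?_
  rcases lt_or_ge x 0 with hx0 | hx0
  · simp [exponentialPDF_of_neg hx0]
  rcases lt_or_ge ε x with hxε | hxε
  · simp [hφ x hxε]
  have hx : x ∈ Icc 0 ε := ⟨hx0, hxε⟩
  rw [indicator_of_mem hx, exponentialPDF_of_nonneg hx0, ENNReal.ofReal_mul hl.le (q := u x)]
  refine mul_le_mul' (ENNReal.ofReal_le_ofReal ?_) (hφu x hx)
  exact mul_le_of_le_one_right hl.le (exp_le_one_iff.2 (by nlinarith))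

lemma ofReal_le_lintegral_expMeasure (hl : 0 < l) {ε : ℝ} {φ : ℝ → ℝ≥0∞} {u : ℝ → ℝ}
    (hu : IntegrableOn u (Icc 0 ε)) (hu0 : ∀ x ∈ Icc 0 ε, 0 ≤ u x)
    (hφu : ∀ x ∈ Icc 0 ε, ENNReal.ofReal (u x) ≤ φ x) :
    ENNReal.ofReal (l * rexp (-(l * ε)) * ∫ x in Icc 0 ε, u x) ≤ ∫⁻ x, φ x ∂expMeasure l := by
  have hc : 0 ≤ l * rexp (-(l * ε)) := by positivity
  rw [lintegral_expMeasure_eq_lintegral_exponentialPDF_mul, ← integral_const_mul,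
    ← lintegral_indicator_Icc_ofReal (hu.const_mul _) fun x hx => mul_nonneg hc (hu0 x hx)]
  refine lintegral_mono fun x => ?_
  by_cases hx : x ∈ Icc 0 ε
  · rw [indicator_of_mem hx, exponentialPDF_of_nonneg hx.1, ENNReal.ofReal_mul hc]
    refine mul_le_mul' (ENNReal.ofReal_le_ofReal ?_) (hφu x hx)
    gcongr
    exact hx.2
  · simp [indicator_of_notMem hx]

end ExponentialLaw

section SumOfExponentials

variable {l₁ l₂ : ℝ}

lemma conv_apply_Iio {μ ν : Measure ℝ} [SFinite μ] [SFinite ν] (w : ℝ) :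
    (μ ∗ ν) (Iio w) = ∫⁻ x, ν (Iio (w - x)) ∂μ := by
  rw [Measure.conv, Measure.map_apply measurable_add measurableSet_Iio,
    Measure.prod_apply (measurable_add measurableSet_Iio)]
  congr! with x
  ext y
  simp [lt_sub_iff_add_lt']

lemma integral_Icc_sub (w : ℝ) (hw : 0 ≤ w) : ∫ x in Icc 0 w, (w - x) = w ^ 2 / 2 := by
  rw [integral_Icc_eq_integral_Ioc, ← intervalIntegral.integral_of_le hw,
    intervalIntegral.integral_sub intervalIntegrable_const intervalIntegral.intervalIntegrable_id,
    integral_id, intervalIntegral.integral_const]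
  simp only [sub_zero, smul_eq_mul]
  ring

lemma conv_expMeasure_Iio_of_nonpos (hl₁ : 0 < l₁) (hl₂ : 0 < l₂) {w : ℝ} (hw : w ≤ 0) :
    (expMeasure l₁ ∗ expMeasure l₂) (Iio w) = 0 := by
  have := isProbabilityMeasure_expMeasure hl₁
  have := isProbabilityMeasure_expMeasure hl₂
  rw [conv_apply_Iio]
  refine (lintegral_congr_ae ?_).trans lintegral_zero
  filter_upwards [ae_nonneg_expMeasure hl₁] with x hx
  exact expMeasure_Iio_of_nonpos hl₂ (by linarith)

lemma conv_expMeasure_Iio_le (hl₁ : 0 < l₁) (hl₂ : 0 < l₂) {w : ℝ} (hw : 0 ≤ w) :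
    (expMeasure l₁ ∗ expMeasure l₂) (Iio w) ≤ ENNReal.ofReal (l₁ * l₂ * w ^ 2 / 2) := by
  have := isProbabilityMeasure_expMeasure hl₁
  have := isProbabilityMeasure_expMeasure hl₂
  rw [conv_apply_Iio]
  convert lintegral_expMeasure_le hl₁ (u := fun x => l₂ * (w - x))
    (Continuous.integrableOn_Icc (by fun_prop)) (fun x hx => by nlinarith [hx.2])
    (fun x hx => expMeasure_Iio_le hl₂ (by linarith [hx.2]))
    (fun x hx => expMeasure_Iio_of_nonpos hl₂ (by linarith)) using 2
  rw [integral_const_mul, integral_Icc_sub w hw]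
  ring

lemma ofReal_le_conv_expMeasure_Iio (hl₁ : 0 < l₁) (hl₂ : 0 < l₂) {w : ℝ} (hw : 0 ≤ w) :
    ENNReal.ofReal (l₁ * l₂ * w ^ 2 / 2 * rexp (-((l₁ + l₂) * w)))
      ≤ (expMeasure l₁ ∗ expMeasure l₂) (Iio w) := by
  have := isProbabilityMeasure_expMeasure hl₁
  have := isProbabilityMeasure_expMeasure hl₂
  rw [conv_apply_Iio]
  convert ofReal_le_lintegral_expMeasure hl₁ (ε := w)
    (u := fun x => l₂ * (w - x) * rexp (-(l₂ * w))) (Continuous.integrableOn_Icc (by fun_prop))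
    (fun x hx => by have := hx.2; positivity) (fun x hx => ?_) using 2
  · rw [integral_mul_const, integral_const_mul, integral_Icc_sub w hw, add_mul, neg_add, exp_add]
    ring
  · refine le_trans (ENNReal.ofReal_le_ofReal ?_)
      (ofReal_le_expMeasure_Iio hl₂ (by linarith [hx.2]))
    exact mul_le_mul_of_nonneg_left (exp_le_exp.2 (by nlinarith [hx.1])) (by nlinarith [hx.2])

end SumOfExponentials

section OutageRegion

def outageSet (s t : ℝ) : Set (ℝ × ℝ) := {p | (1 + s * p.1) * (1 + s * p.2) < t}

noncomputable def outageBoundary (s t x : ℝ) : ℝ := (t / (1 + s * x) - 1) / s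

variable {s t : ℝ}

lemma measurableSet_outageSet : MeasurableSet (outageSet s t) :=
  measurableSet_lt (by fun_prop) measurable_const

lemma prodMk_preimage_outageSet (hs : 0 < s) {x : ℝ} (hx : 0 ≤ x) :
    Prod.mk x ⁻¹' outageSet s t = Iio (outageBoundary s t x) := by
  have hpos : 0 < 1 + s * x := by positivity
  ext y
  simp only [outageSet, outageBoundary, mem_preimage, mem_ofPred_eq, mem_Iio]
  rw [lt_div_iff₀ hs, lt_sub_iff_add_lt, lt_div_iff₀ hpos]
  constructor <;> intro h <;> linear_combination h

lemma prod_outageSet {μ ν : Measure ℝ} [SFinite ν] (hμ : ∀ᵐ x ∂μ, 0 ≤ x) (hs : 0 < s) :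
    (μ.prod ν) (outageSet s t) = ∫⁻ x, ν (Iio (outageBoundary s t x)) ∂μ := by
  rw [Measure.prod_apply measurableSet_outageSet]
  refine lintegral_congr_ae ?_
  filter_upwards [hμ] with x hx
  rw [prodMk_preimage_outageSet hs hx]

lemma outageBoundary_nonneg (hs : 0 < s) {x : ℝ} (hx : x ∈ Icc 0 ((t - 1) / s)) :
    0 ≤ outageBoundary s t x := by
  have hpos : 0 < 1 + s * x := by nlinarith [hx.1]
  have hxt : 1 + s * x ≤ t := by have := (le_div_iff₀ hs).1 hx.2; linarith
  exact div_nonneg (sub_nonneg.2 ((one_le_div hpos).2 hxt)) hs.le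

lemma outageBoundary_le (hs : 0 < s) (ht : 1 ≤ t) {x : ℝ} (hx : 0 ≤ x) :
    outageBoundary s t x ≤ (t - 1) / s := by
  have h : t / (1 + s * x) ≤ t := div_le_self (by linarith) (by nlinarith)
  exact div_le_div_of_nonneg_right (by linarith) hs.le

lemma outageBoundary_nonpos (hs : 0 < s) {x : ℝ} (hx : 0 ≤ x) (hxt : (t - 1) / s ≤ x) :
    outageBoundary s t x ≤ 0 := by
  have hpos : 0 < 1 + s * x := by positivity
  have h : t ≤ 1 + s * x := by rw [div_le_iff₀ hs] at hxt; linarith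
  exact div_nonpos_of_nonpos_of_nonneg (sub_nonpos.2 ((div_le_one hpos).2 h)) hs.le

lemma continuousOn_outageBoundary (hs : 0 < s) :
    ContinuousOn (outageBoundary s t) (Ici 0) := by
  refine ((continuousOn_const.div (by fun_prop) fun x hx => ?_).sub continuousOn_const).div_const _
  have : 0 ≤ x := hx
  positivity

lemma integral_outageBoundary_sq (hs : 0 < s) (ht : 1 ≤ t) :
    ∫ x in Icc 0 ((t - 1) / s), outageBoundary s t x ^ 2
      = (t ^ 2 - 2 * t * Real.log t - 1) / s ^ 3 := by
  have hε : 0 ≤ (t - 1) / s := div_nonneg (by linarith) hs.le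
  rw [integral_Icc_eq_integral_Ioc, ← intervalIntegral.integral_of_le hε]
  have hpos : ∀ x ∈ uIcc 0 ((t - 1) / s), 0 < 1 + s * x := fun x hx => by
    rw [uIcc_of_le hε] at hx
    nlinarith [hx.1]
  have hderiv : ∀ x ∈ uIcc 0 ((t - 1) / s), HasDerivAt
      (fun x => (-(t ^ 2) / s * (1 + s * x)⁻¹ - 2 * t / s * Real.log (1 + s * x) + x) / s ^ 2)
      (outageBoundary s t x ^ 2) x := fun x hx => by
    have h1 : HasDerivAt (fun x => 1 + s * x) s x := by
      simpa using ((hasDerivAt_id x).const_mul s).const_add 1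
    have h := ((((h1.inv (hpos x hx).ne').const_mul (-(t ^ 2) / s)).sub
      ((h1.log (hpos x hx).ne').const_mul (2 * t / s))).add (hasDerivAt_id x)).div_const (s ^ 2)
    refine h.congr_deriv ?_
    have := (hpos x hx).ne'
    simp only [outageBoundary]
    field_simp
    ring
  rw [intervalIntegral.integral_eq_sub_of_hasDerivAt hderiv
    (((continuousOn_outageBoundary hs).mono fun x hx => by
      rw [uIcc_of_le hε] at hx; exact hx.1).pow 2).intervalIntegrable]
  have hend : 1 + s * ((t - 1) / s) = t := by field_simp; ring
  simp only [hend, mul_zero, add_zero, Real.log_one]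
  have : t ≠ 0 := by linarith
  field_simp
  ring

variable {l₀ l₁ l₂ : ℝ}

lemma prod_conv_outageSet_le (hl₀ : 0 < l₀) (hl₁ : 0 < l₁) (hl₂ : 0 < l₂) (hs : 0 < s)
    (ht : 1 ≤ t) :
    ((expMeasure l₀).prod (expMeasure l₁ ∗ expMeasure l₂)) (outageSet s t)
      ≤ ENNReal.ofReal (l₀ * l₁ * l₂ / 2 * ((t ^ 2 - 2 * t * Real.log t - 1) / s ^ 3)) := by
  have := isProbabilityMeasure_expMeasure hl₁
  have := isProbabilityMeasure_expMeasure hl₂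
  have hε : 0 ≤ (t - 1) / s := div_nonneg (by linarith) hs.le
  rw [prod_outageSet (ae_nonneg_expMeasure hl₀) hs, ← integral_outageBoundary_sq hs ht]
  convert lintegral_expMeasure_le hl₀ (u := fun x => l₁ * l₂ * outageBoundary s t x ^ 2 / 2)
    ((((continuousOn_outageBoundary hs).mono fun x hx => hx.1).pow 2).const_mul _
      |>.div_const _ |>.integrableOn_Icc) (fun x _ => by positivity)
    (fun x hx => conv_expMeasure_Iio_le hl₁ hl₂ (outageBoundary_nonneg hs hx))
    (fun x hx => conv_expMeasure_Iio_of_nonpos hl₁ hl₂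
      (outageBoundary_nonpos hs (hε.trans hx.le) hx.le)) using 2
  rw [integral_div, integral_const_mul]
  ring

lemma ofReal_le_prod_conv_outageSet (hl₀ : 0 < l₀) (hl₁ : 0 < l₁) (hl₂ : 0 < l₂) (hs : 0 < s)
    (ht : 1 ≤ t) :
    ENNReal.ofReal (rexp (-((l₀ + l₁ + l₂) * ((t - 1) / s)))
        * (l₀ * l₁ * l₂ / 2 * ((t ^ 2 - 2 * t * Real.log t - 1) / s ^ 3)))
      ≤ ((expMeasure l₀).prod (expMeasure l₁ ∗ expMeasure l₂)) (outageSet s t) := by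
  have := isProbabilityMeasure_expMeasure hl₁
  have := isProbabilityMeasure_expMeasure hl₂
  set ε := (t - 1) / s
  rw [prod_outageSet (ae_nonneg_expMeasure hl₀) hs, ← integral_outageBoundary_sq hs ht]
  convert ofReal_le_lintegral_expMeasure hl₀ (ε := ε)
    (u := fun x => l₁ * l₂ * outageBoundary s t x ^ 2 / 2 * rexp (-((l₁ + l₂) * ε)))
    ((((continuousOn_outageBoundary hs).mono fun x hx => hx.1).pow 2).const_mul _
      |>.div_const _ |>.mul_const _ |>.integrableOn_Icc) (fun x _ => by positivity)
    (fun x hx => ?_) using 2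
  · rw [integral_mul_const, integral_div, integral_const_mul, add_assoc, add_mul, neg_add,
      exp_add]
    ring
  · refine le_trans (ENNReal.ofReal_le_ofReal ?_)
      (ofReal_le_conv_expMeasure_Iio hl₁ hl₂ (outageBoundary_nonneg hs hx))
    refine mul_le_mul_of_nonneg_left (exp_le_exp.2 ?_) (by positivity)
    have := outageBoundary_le hs ht hx.1
    nlinarith

end OutageRegion

lemma ProbabilityTheory.iIndepFun.indepFun_finset_comp {Ω ι β γ : Type*} [MeasurableSpace Ω]
    [MeasurableSpace β] [MeasurableSpace γ] {μ : Measure Ω} {f : ι → Ω → β}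
    (h : iIndepFun f μ) (hf : ∀ i, Measurable (f i)) {i : ι} {T : Finset ι} (hi : i ∉ T)
    {φ : (T → β) → γ} (hφ : Measurable φ) :
    IndepFun (f i) (fun ω => φ fun j : T => f j ω) μ :=
  (h.indepFun_finset {i} T (Finset.disjoint_singleton_left.2 hi) hf).comp
    (measurable_pi_apply (⟨i, Finset.mem_singleton_self i⟩ : ({i} : Finset ι))) hφ

lemma measure_inter_preimage_eq_of_iIndepFun {Ω : Type*} [MeasurableSpace Ω] {μ : Measure Ω}
    [IsProbabilityMeasure μ] {G : Fin 5 → Ω → ℝ} (hmeas : ∀ i, Measurable (G i))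
    (hindep : iIndepFun G μ) {S₁ S₂ : Set ℝ} {A : Set (ℝ × ℝ)} (hS₁ : MeasurableSet S₁)
    (hS₂ : MeasurableSet S₂) (hA : MeasurableSet A) :
    μ (G 1 ⁻¹' S₁ ∩ G 2 ⁻¹' S₂ ∩ (fun ω => (G 0 ω, G 3 ω + G 4 ω)) ⁻¹' A)
      = μ.map (G 1) S₁ * μ.map (G 2) S₂ * ((μ.map (G 0)).prod (μ.map (G 3) ∗ μ.map (G 4))) A := by
  set W : Ω → ℝ × ℝ := fun ω => (G 0 ω, G 3 ω + G 4 ω)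
  have hW : Measurable W := (hmeas 0).prodMk ((hmeas 3).add (hmeas 4))
  have h₁ : IndepFun (G 1) (fun ω => (G 2 ω, W ω)) μ :=
    hindep.indepFun_finset_comp hmeas (T := {0, 2, 3, 4}) (by decide)
      (φ := fun v => (v ⟨2, by decide⟩, v ⟨0, by decide⟩, v ⟨3, by decide⟩ + v ⟨4, by decide⟩))
      (by fun_prop)
  have h₂ : IndepFun (G 2) W μ :=
    hindep.indepFun_finset_comp hmeas (T := {0, 3, 4}) (by decide)
      (φ := fun v => (v ⟨0, by decide⟩, v ⟨3, by decide⟩ + v ⟨4, by decide⟩)) (by fun_prop)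
  have h₀ : IndepFun (G 0) (G 3 + G 4) μ :=
    (hindep.indepFun_prodMk hmeas 3 4 0 (by decide) (by decide)).symm.comp measurable_id
      measurable_add
  have hlawW : μ.map W = (μ.map (G 0)).prod (μ.map (G 3) ∗ μ.map (G 4)) := by
    rw [← (hindep.indepFun (by decide : (3 : Fin 5) ≠ 4)).map_add_eq_map_conv_map
      (hmeas 3) (hmeas 4)]
    exact (indepFun_iff_map_prod_eq_prod_map_map (hmeas 0).aemeasurable
      ((hmeas 3).add (hmeas 4)).aemeasurable).1 h₀
  rw [inter_assoc, ← mk_preimage_prod, h₁.measure_inter_preimage_eq_mul _ _ hS₁ (hS₂.prod hA),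
    mk_preimage_prod, h₂.measure_inter_preimage_eq_mul _ _ hS₂ hA, ← mul_assoc,
    Measure.map_apply (hmeas 1) hS₁, Measure.map_apply (hmeas 2) hS₂, ← hlawW,
    Measure.map_apply hW hA]

section Asymptotics

lemma isEquivalent_of_mul_le_of_le {α : Type*} {l : Filter α} {a u v : α → ℝ}
    (ha : Tendsto a l (𝓝 1)) (hv : ∀ᶠ x in l, 0 < v x)
    (h : ∀ᶠ x in l, a x * v x ≤ u x ∧ u x ≤ v x) : u ~[l] v := by
  refine isEquivalent_of_tendsto_one (tendsto_of_tendsto_of_tendsto_of_le_of_le' ha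
    tendsto_const_nhds ?_ ?_)
  · filter_upwards [hv, h] with x hvx hx
    exact (le_div_iff₀ hvx).2 hx.1
  · filter_upwards [hv, h] with x hvx hx
    exact (div_le_one hvx).2 hx.2

lemma tendsto_one_add_div_rpow (p : ℝ) :
    Tendsto (fun s : ℝ => ((1 + s) / s) ^ p) atTop (𝓝 1) := by
  have h : Tendsto (fun s : ℝ => s⁻¹ + 1) atTop (𝓝 (0 + 1)) :=
    tendsto_inv_atTop_zero.add tendsto_const_nhds
  rw [zero_add] at h
  simpa using (h.congr' (by filter_upwards [eventually_gt_atTop 0] with s hs; field_simp)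
    ).rpow_const (p := p) (Or.inl one_ne_zero)

lemma isEquivalent_one_add_rpow (p : ℝ) :
    (fun s : ℝ => (1 + s) ^ p) ~[atTop] (fun s => s ^ p) := by
  refine isEquivalent_of_tendsto_one ((tendsto_one_add_div_rpow p).congr' ?_)
  filter_upwards [eventually_gt_atTop 0] with s hs
  rw [Pi.div_apply, div_rpow (by linarith) hs.le]

lemma tendsto_one_add_rpow_sub_one_div {p : ℝ} (hp : p < 1) :
    Tendsto (fun s : ℝ => ((1 + s) ^ p - 1) / s) atTop (𝓝 0) := by
  have h := ((tendsto_one_add_div_rpow p).mul (tendsto_rpow_neg_atTop (sub_pos.2 hp))).sub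
    tendsto_inv_atTop_zero
  rw [mul_zero, sub_zero] at h
  refine h.congr' ?_
  filter_upwards [eventually_gt_atTop 0] with s hs
  rw [div_rpow (by linarith) hs.le, neg_sub, rpow_sub hs, rpow_one]
  field_simp

lemma tendsto_exp_neg_const_mul {α : Type*} {l : Filter α} {f : α → ℝ}
    (hf : Tendsto f l (𝓝 0)) (c : ℝ) : Tendsto (fun x => rexp (-(c * f x))) l (𝓝 1) := by
  have h := (hf.const_mul c).neg
  rw [mul_zero, neg_zero] at h
  exact tendsto_exp_nhds_zero_nhds_one.comp h

lemma isEquivalent_sq_sub_mul_log_sub_one :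
    (fun t : ℝ => t ^ 2 - 2 * t * Real.log t - 1) ~[atTop] (fun t => t ^ 2) := by
  have hlog : (fun t : ℝ => t * Real.log t) =o[atTop] (fun t => t * t) :=
    (isBigO_refl _ _).mul_isLittleO isLittleO_log_id_atTop
  have hone : (fun _ : ℝ => (1 : ℝ)) =o[atTop] (fun t => t * t) :=
    isLittleO_const_left.2 (Or.inr (tendsto_norm_atTop_atTop.comp
      (tendsto_id.atTop_mul_atTop₀ tendsto_id)))
  simp only [sq]
  exact (IsEquivalent.refl.add_isLittleO ((hlog.const_mul_left (-2)).sub hone)).congr_left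
    (Eventually.of_forall fun t => by simp only [Pi.add_apply]; ring)

end Asymptotics

lemma prod_conv_outageSet_isEquivalent {l₀ l₁ l₂ : ℝ} (hl₀ : 0 < l₀) (hl₁ : 0 < l₁)
    (hl₂ : 0 < l₂) {r : ℝ} (hr₀ : 0 < r) (hr : r < 1 / 2) :
    (fun s : ℝ => (((expMeasure l₀).prod (expMeasure l₁ ∗ expMeasure l₂))
        (outageSet s ((1 + s) ^ (2 * r)))).toReal)
      ~[atTop] (fun s => l₀ * l₁ * l₂ / 2 * s ^ (-(3 - 4 * r))) := by
  have := isProbabilityMeasure_expMeasure hl₀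
  have := isProbabilityMeasure_expMeasure hl₁
  have := isProbabilityMeasure_expMeasure hl₂
  set t : ℝ → ℝ := fun s => (1 + s) ^ (2 * r)
  set M : ℝ → ℝ :=
    fun s => l₀ * l₁ * l₂ / 2 * ((t s ^ 2 - 2 * t s * Real.log (t s) - 1) / s ^ 3)
  have ht : Tendsto t atTop atTop :=
    (tendsto_rpow_atTop (by linarith)).comp (tendsto_atTop_add_const_left _ 1 tendsto_id)
  have hM : M ~[atTop] (fun s => l₀ * l₁ * l₂ / 2 * s ^ (-(3 - 4 * r))) := by
    have hN := (isEquivalent_sq_sub_mul_log_sub_one.comp_tendsto ht).trans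
      ((isEquivalent_one_add_rpow (2 * r)).pow 2)
    refine (IsEquivalent.refl.mul (hN.div IsEquivalent.refl)).trans_eventuallyEq ?_
    filter_upwards [eventually_gt_atTop 0] with s hs
    simp only [Pi.mul_apply, Pi.div_apply, Pi.pow_apply]
    rw [← rpow_mul_natCast hs.le, ← rpow_natCast s 3, ← rpow_sub hs]
    congr 2
    push_cast
    ring
  have hMpos := hM.eventually_pos (by
    filter_upwards [eventually_gt_atTop 0] with s hs
    positivity)
  have ha : Tendsto (fun s => rexp (-((l₀ + l₁ + l₂) * ((t s - 1) / s)))) atTop (𝓝 1) :=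
    tendsto_exp_neg_const_mul (tendsto_one_add_rpow_sub_one_div (by linarith)) _
  refine IsEquivalent.trans (isEquivalent_of_mul_le_of_le ha hMpos ?_) hM
  filter_upwards [eventually_gt_atTop 0, hMpos] with s hs hMs
  have hts : 1 ≤ t s := one_le_rpow (by linarith) (by linarith)
  exact ⟨(ENNReal.ofReal_le_iff_le_toReal (measure_ne_top _ _)).1
      (ofReal_le_prod_conv_outageSet hl₀ hl₁ hl₂ hs hts),
    ENNReal.toReal_le_of_le_ofReal hMs.le (prod_conv_outageSet_le hl₀ hl₁ hl₂ hs hts)⟩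

lemma setOf_le_one_add_mul_eq_preimage {Ω : Type*} {s : ℝ} (hs : 0 < s) (t : ℝ)
    (X : Ω → ℝ) :
    {ω | 1 + s * X ω ≥ t} = X ⁻¹' Ici ((t - 1) / s) := by
  ext ω
  simp only [mem_ofPred_eq, mem_preimage, mem_Ici, ge_iff_le, div_le_iff₀ hs]
  constructor <;> intro h <;> linarith

/-- the probability that both relays decode and the synchronous
space-time-coded channel is in outage is asymptotically
`(1/2) λ_{S,D} λ_{R₁,D} λ_{R₂,D} s^{-(3-4r)}` as `s → ∞`. -/
theorem stmt_5
    {Ω : Type*} [MeasurableSpace Ω] (μ : Measure Ω) [IsProbabilityMeasure μ]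
    (G : Fin 5 → Ω → ℝ) (lamSD lamSR1 lamSR2 lamRD1 lamRD2 : ℝ)
    (hlamSD : 0 < lamSD) (hlamSR1 : 0 < lamSR1) (hlamSR2 : 0 < lamSR2)
    (hlamRD1 : 0 < lamRD1) (hlamRD2 : 0 < lamRD2)
    (hmeas : ∀ i, Measurable (G i))
    (hindep : iIndepFun G μ)
    (hlaw0 : μ.map (G 0) = expMeasure lamSD)
    (hlaw1 : μ.map (G 1) = expMeasure lamSR1)
    (hlaw2 : μ.map (G 2) = expMeasure lamSR2)
    (hlaw3 : μ.map (G 3) = expMeasure lamRD1)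
    (hlaw4 : μ.map (G 4) = expMeasure lamRD2)
    (r : ℝ) (hr : r ∈ Set.Ioo (0:ℝ) (1/2)) :
    (fun s : ℝ => (μ ({ω | 1 + s * G 1 ω ≥ (1+s) ^ (2*r)}
        ∩ {ω | 1 + s * G 2 ω ≥ (1+s) ^ (2*r)}
        ∩ {ω | (1 + s * G 0 ω) * (1 + s * (G 3 ω + G 4 ω)) < (1+s) ^ (2*r)})).toReal)
      ~[atTop]
      (fun s : ℝ => (1/2) * lamSD * lamRD1 * lamRD2 * s ^ (-(3-4*r))) := by
  obtain ⟨hr₀, hr⟩ := hr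
  have hε := tendsto_one_add_rpow_sub_one_div (p := 2 * r) (by linarith)
  have hdecode : Tendsto (fun s => rexp (-(lamSR1 * (((1 + s) ^ (2 * r) - 1) / s)))
      * rexp (-(lamSR2 * (((1 + s) ^ (2 * r) - 1) / s)))) atTop (𝓝 1) := by
    simpa using (tendsto_exp_neg_const_mul hε lamSR1).mul (tendsto_exp_neg_const_mul hε lamSR2)
  refine (((isEquivalent_const_iff_tendsto one_ne_zero).2 hdecode).mul
    (prod_conv_outageSet_isEquivalent hlamSD hlamRD1 hlamRD2 hr₀ hr)).congr_left ?_
    |>.congr_right ?_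
  · filter_upwards [eventually_gt_atTop 0] with s hs
    have hε₀ : 0 ≤ ((1 + s) ^ (2 * r) - 1) / s :=
      div_nonneg (sub_nonneg.2 (one_le_rpow (by linarith) (by linarith))) hs.le
    have houtage : {ω | (1 + s * G 0 ω) * (1 + s * (G 3 ω + G 4 ω)) < (1 + s) ^ (2 * r)}
        = (fun ω => (G 0 ω, G 3 ω + G 4 ω)) ⁻¹' outageSet s ((1 + s) ^ (2 * r)) := rfl
    rw [setOf_le_one_add_mul_eq_preimage hs, setOf_le_one_add_mul_eq_preimage hs, houtage,
      measure_inter_preimage_eq_of_iIndepFun hmeas hindep measurableSet_Ici measurableSet_Ici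
        measurableSet_outageSet, hlaw0, hlaw1, hlaw2, hlaw3, hlaw4,
      expMeasure_Ici hlamSR1 hε₀, expMeasure_Ici hlamSR2 hε₀]
    simp [ENNReal.toReal_mul, ENNReal.toReal_ofReal (exp_pos _).le, outageSet]
  · exact Eventually.of_forall fun s => by simp only [Pi.mul_apply, Function.const_apply]; ring
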